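/- arXiv:2003.01503 — 2 statements merged into one kernel-verified Lean document; each statement's English description precedes it below -/
import Mathlib

section
/- A decomposition N = N_1 ∪ ... ∪ N_k of a chemical reaction network is bi-independent if and only if it is independent or incidence independent and the deficiencies satisfy δ = δ_1 + ... + δ_k. -/
open scoped Classical

noncomputable section

/-- A reaction: an ordered pair (reactant complex, product complex) of vectors in ℝ^S. -/
abbrev Rxn (S : Type*) := (S → ℝ) × (S → ℝ)

variable {S : Type*} [Fintype S]

/-- The set of complexes occurring in a reaction set. -/
def complexesOf (R : Finset (Rxn S)) : Finset (S → ℝ) :=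
  R.image Prod.fst ∪ R.image Prod.snd

/-- `(C, R)` is a chemical reaction network on the species set `S`:
complexes have nonnegative integer coordinates, reactions go between complexes,
no reaction is a loop, and every complex occurs in at least one reaction. -/
def IsCRN (C : Finset (S → ℝ)) (R : Finset (Rxn S)) : Prop :=
  C.Nonempty ∧ R.Nonempty ∧
  (∀ y ∈ C, ∀ s, ∃ n : ℕ, y s = (n : ℝ)) ∧
  (∀ r ∈ R, r.1 ∈ C ∧ r.2 ∈ C) ∧
  (∀ r ∈ R, r.1 ≠ r.2) ∧
  (∀ y ∈ C, ∃ r ∈ R, r.1 = y ∨ r.2 = y)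

/-- The stoichiometric subspace `span {y' - y : (y, y') ∈ R}`. -/
def stoichSubspace (R : Finset (Rxn S)) : Submodule ℝ (S → ℝ) :=
  Submodule.span ℝ ((fun r : Rxn S => r.2 - r.1) '' ↑R)

/-- The rank `s = dim S` of the network. -/
def crnRank (R : Finset (Rxn S)) : ℕ := Module.finrank ℝ (stoichSubspace R)

/-- The standard basis vector `ω_y` of the complex space `ℝ^C` (realized inside
the space of real-valued functions on complexes). -/
def omegaC (y : S → ℝ) : (S → ℝ) → ℝ := fun z => if z = y then 1 else 0

/-- The image of the incidence map `I_a`, i.e. the span of the vectors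
`ω_{y'} - ω_y` over reactions `y → y'`. -/
def incImage (R : Finset (Rxn S)) : Submodule ℝ ((S → ℝ) → ℝ) :=
  Submodule.span ℝ ((fun r : Rxn S => omegaC r.2 - omegaC r.1) '' ↑R)

/-- The underlying undirected graph of `(C, R)`, on the complexes occurring in `R`. -/
def linkGraph (R : Finset (Rxn S)) : SimpleGraph {y : S → ℝ // y ∈ complexesOf R} where
  Adj a b := a ≠ b ∧ ((a.1, b.1) ∈ R ∨ (b.1, a.1) ∈ R)
  symm := ⟨fun a b h => ⟨h.1.symm, h.2.symm⟩⟩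
  loopless := ⟨fun a h => h.1 rfl⟩

/-- `n`, the number of complexes. -/
def numComplexes (R : Finset (Rxn S)) : ℕ := (complexesOf R).card

/-- `l`, the number of linkage classes (connected components of the
underlying undirected graph). -/
def numLinkageClasses (R : Finset (Rxn S)) : ℕ :=
  Nat.card (linkGraph R).ConnectedComponent

/-- The deficiency `δ = n - l - s` (as an integer). -/
def deficiency (R : Finset (Rxn S)) : ℤ :=
  (numComplexes R : ℤ) - (numLinkageClasses R : ℤ) - (crnRank R : ℤ)

/-- A covering of the reaction set `R`: a family of subsets of `R` whose union is `R`. -/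
def IsCovering {ι : Type*} (R : Finset (Rxn S)) (f : ι → Finset (Rxn S)) : Prop :=
  (∀ i, f i ⊆ R) ∧ ∀ r ∈ R, ∃ i, r ∈ f i

/-- A decomposition of the reaction set `R`: a partition of `R` into nonempty subsets. -/
def IsDecomposition {ι : Type*} (R : Finset (Rxn S)) (f : ι → Finset (Rxn S)) : Prop :=
  (∀ i, (f i).Nonempty) ∧ (Pairwise fun i j => Disjoint (f i) (f j)) ∧
  (∀ i, f i ⊆ R) ∧ (∀ r ∈ R, ∃ i, r ∈ f i)

/-- Independence: the stoichiometric subspace is the direct sum of those of the subnetworks. -/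
def IsIndependent {ι : Type*} (R : Finset (Rxn S)) (f : ι → Finset (Rxn S)) : Prop :=
  (⨆ i, stoichSubspace (f i)) = stoichSubspace R ∧
  iSupIndep fun i => stoichSubspace (f i)

/-- Incidence independence: the image of the incidence map is the direct sum of the
images of the incidence maps of the subnetworks. -/
def IsIncidenceIndependent {ι : Type*} (R : Finset (Rxn S)) (f : ι → Finset (Rxn S)) : Prop :=
  (⨆ i, incImage (f i)) = incImage R ∧
  iSupIndep fun i => incImage (f i)

/-- A `𝒞`-decomposition: the complex sets of the subnetworks are pairwise disjoint. -/
def CDisjoint {ι : Type*} (f : ι → Finset (Rxn S)) : Prop :=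
  Pairwise fun i j => Disjoint (complexesOf (f i)) (complexesOf (f j))

/-- The set of nonzero complexes of a reaction set. -/
def nonzeroComplexesOf (R : Finset (Rxn S)) : Finset (S → ℝ) := (complexesOf R).erase 0

/-- A `𝒞*`-decomposition: the sets of nonzero complexes are pairwise disjoint. -/
def CstarDisjoint {ι : Type*} (f : ι → Finset (Rxn S)) : Prop :=
  Pairwise fun i j => Disjoint (nonzeroComplexesOf (f i)) (nonzeroComplexesOf (f j))

/-- A coarsening: each block of `f` is contained in exactly one block of `g`. -/
def IsCoarsening {ι κ : Type*} (f : ι → Finset (Rxn S)) (g : κ → Finset (Rxn S)) : Prop :=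
  ∀ i, ∃! j, f i ⊆ g j

/-- Undirected reachability in the graph `(C, R)`. -/
def undirReach (R : Finset (Rxn S)) : (S → ℝ) → (S → ℝ) → Prop :=
  Relation.ReflTransGen fun y z => (y, z) ∈ R ∨ (z, y) ∈ R

/-- Directed reachability in the digraph `(C, R)`. -/
def dirReach (R : Finset (Rxn S)) : (S → ℝ) → (S → ℝ) → Prop :=
  Relation.ReflTransGen fun y z => (y, z) ∈ R

/-- Weak reversibility: every connected component of the directed graph `(C, R)`
is strongly connected. -/
def WeaklyReversible (R : Finset (Rxn S)) : Prop :=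
  ∀ y z, undirReach R y z → dirReach R y z

/-- The set of complex balanced equilibria `Z₊(N, K)` of a kinetics `K` on the
(sub)network with reaction set `R`: positive vectors `x` with `I_a K(x) = 0`. -/
def Zplus (R : Finset (Rxn S)) (K : (S → ℝ) → Rxn S → ℝ) : Set (S → ℝ) :=
  {x | (∀ s, 0 < x s) ∧ ∑ r ∈ R, K x r • (omegaC r.2 - omegaC r.1) = 0}

/-- The reactions lying in the linkage class of the zero complex. -/
def zeroLinkReactions (R : Finset (Rxn S)) : Finset (Rxn S) :=
  R.filter fun r => undirReach R 0 r.1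

/-- The reaction set of the linkage class `c`: all reactions whose complexes lie in `c`. -/
def lcReactions (R : Finset (Rxn S)) (c : (linkGraph R).ConnectedComponent) :
    Finset (Rxn S) :=
  R.filter fun r => ∃ h : r.1 ∈ complexesOf R, (linkGraph R).connectedComponentMk ⟨r.1, h⟩ = c

/-- The network has independent linkage classes (ILC): the linkage class
decomposition is independent. -/
def HasILC (R : Finset (Rxn S)) : Prop := IsIndependent R (lcReactions R)

/-!
For a finite family of subspaces, `dim (⨆ i, V i) ≤ ∑ i, dim (V i)`, with equality exactly when
the family is independent (the kernel of `⨁ i, V i → ⨆ i, V i` measures the defect). For a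
decomposition both the stoichiometric subspace and the image of `I_a` are the sums of those of the
subnetworks, so `s ≤ ∑ s_i` and `rank I_a ≤ ∑ rank I_{a,i}`, with equality exactly for independence
and incidence independence. Choosing a representative in each linkage class, the vectors
`ω_y - ω_{rep y}` over the `n - l` complexes that are not representatives form a basis of the image
of `I_a`, so `δ = rank I_a - s`. Hence `δ - ∑ δ_i` is the difference of the two nonpositive defects
`rank I_a - ∑ rank I_{a,i}` and `s - ∑ s_i`; when one of them vanishes, the other vanishes iff
`δ = ∑ δ_i`.
-/

open Module

section FinrankIndep

variable {K M ι : Type*} [DivisionRing K] [AddCommGroup M] [Module K M] [Fintype ι]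
  (V : ι → Submodule K M) [∀ i, FiniteDimensional K (V i)]

theorem Submodule.finrank_iSup_add_finrank_ker_lsum [DecidableEq ι] :
    finrank K ↥(⨆ i, V i) + finrank K (LinearMap.ker (DFinsupp.lsum ℕ fun i => (V i).subtype)) =
      ∑ i, finrank K (V i) := by
  rw [Submodule.iSup_eq_range_dfinsupp_lsum, LinearMap.finrank_range_add_finrank_ker]
  exact finrank_directSum K fun i => V i

theorem Submodule.finrank_iSup_le_sum : finrank K ↥(⨆ i, V i) ≤ ∑ i, finrank K (V i) := by
  classical
  exact (Submodule.finrank_iSup_add_finrank_ker_lsum V).symm ▸ Nat.le_add_right _ _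

theorem Submodule.iSupIndep_iff_finrank_iSup_eq_sum :
    iSupIndep V ↔ finrank K ↥(⨆ i, V i) = ∑ i, finrank K (V i) := by
  classical
  rw [iSupIndep_iff_dfinsupp_lsum_injective, ← LinearMap.ker_eq_bot,
    ← Submodule.finrank_eq_zero, ← Submodule.finrank_iSup_add_finrank_ker_lsum V]
  omega

end FinrankIndep

section Stoichiometric

variable {σ ι : Type*} {R : Finset (Rxn σ)} {f : ι → Finset (Rxn σ)}

instance (R : Finset (Rxn σ)) : FiniteDimensional ℝ (stoichSubspace R) :=
  FiniteDimensional.span_of_finite ℝ (R.finite_toSet.image _)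

theorem IsDecomposition.isCovering (h : IsDecomposition R f) : IsCovering R f :=
  h.2.2

theorem IsCovering.iUnion_eq (h : IsCovering R f) : ⋃ i, (f i : Set (Rxn σ)) = R :=
  subset_antisymm (Set.iUnion_subset fun i => Finset.coe_subset.mpr (h.1 i))
    fun r hr => Set.mem_iUnion.mpr (h.2 r hr)

theorem IsCovering.iSup_stoichSubspace (h : IsCovering R f) :
    ⨆ i, stoichSubspace (f i) = stoichSubspace R := by
  simp only [stoichSubspace, ← Submodule.span_iUnion, ← Set.image_iUnion, h.iUnion_eq]

variable [Fintype ι]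

theorem IsCovering.crnRank_le_sum (h : IsCovering R f) : crnRank R ≤ ∑ i, crnRank (f i) := by
  rw [crnRank, ← h.iSup_stoichSubspace]
  exact Submodule.finrank_iSup_le_sum _

theorem IsCovering.isIndependent_iff (h : IsCovering R f) :
    IsIndependent R f ↔ crnRank R = ∑ i, crnRank (f i) := by
  rw [IsIndependent, and_iff_right h.iSup_stoichSubspace,
    Submodule.iSupIndep_iff_finrank_iSup_eq_sum, h.iSup_stoichSubspace]
  rfl

end Stoichiometric

section Incidence

variable {σ : Type*} [Fintype σ]

instance (R : Finset (Rxn σ)) : FiniteDimensional ℝ (incImage R) :=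
  FiniteDimensional.span_of_finite ℝ (R.finite_toSet.image _)

variable (R : Finset (Rxn σ))

def linkageRep (y : complexesOf R) : complexesOf R :=
  ((linkGraph R).connectedComponentMk y).out

def omegaSubRep (y : complexesOf R) : (σ → ℝ) → ℝ :=
  omegaC y.1 - omegaC (linkageRep R y).1

variable {R}

theorem connectedComponentMk_linkageRep (y : complexesOf R) :
    (linkGraph R).connectedComponentMk (linkageRep R y) = (linkGraph R).connectedComponentMk y :=
  Quot.out_eq _

theorem linkageRep_linkageRep (y : complexesOf R) :
    linkageRep R (linkageRep R y) = linkageRep R y :=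
  congrArg Quot.out (connectedComponentMk_linkageRep y)

theorem omegaC_sub_mem_incImage_of_reachable {u v : complexesOf R}
    (h : (linkGraph R).Reachable u v) : omegaC u.1 - omegaC v.1 ∈ incImage R := by
  obtain ⟨w⟩ := h
  induction w with
  | nil => simp
  | @cons x y z hxy p ih =>
    have hxy : omegaC x.1 - omegaC y.1 ∈ incImage R := by
      rcases hxy.2 with h | h
      · simpa using (incImage R).neg_mem (Submodule.subset_span ⟨_, h, rfl⟩)
      · exact Submodule.subset_span ⟨_, h, rfl⟩
    simpa using (incImage R).add_mem hxy ih

theorem incImage_eq_span_omegaSubRep :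
    incImage R =
      Submodule.span ℝ (Set.range fun y : {y // linkageRep R y ≠ y} => omegaSubRep R y.1) := by
  set W := Submodule.span ℝ (Set.range fun y : {y // linkageRep R y ≠ y} => omegaSubRep R y.1)
  have hmem : ∀ y, omegaSubRep R y ∈ W := by
    intro y
    by_cases hy : linkageRep R y = y
    · simp [omegaSubRep, hy]
    · exact Submodule.subset_span ⟨⟨y, hy⟩, rfl⟩
  apply le_antisymm
  · refine Submodule.span_le.mpr ?_
    rintro _ ⟨r, hr, rfl⟩
    have h1 : r.1 ∈ complexesOf R := Finset.mem_union_left _ (Finset.mem_image_of_mem _ hr)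
    have h2 : r.2 ∈ complexesOf R := Finset.mem_union_right _ (Finset.mem_image_of_mem _ hr)
    by_cases h12 : r.1 = r.2
    · simp [h12]
    have hadj : (linkGraph R).Adj ⟨r.1, h1⟩ ⟨r.2, h2⟩ :=
      ⟨fun h => h12 (congrArg Subtype.val h), Or.inl hr⟩
    have hrep : linkageRep R ⟨r.1, h1⟩ = linkageRep R ⟨r.2, h2⟩ :=
      congrArg Quot.out (SimpleGraph.ConnectedComponent.sound hadj.reachable)
    have hdiff : omegaC r.2 - omegaC r.1 = omegaSubRep R ⟨r.2, h2⟩ - omegaSubRep R ⟨r.1, h1⟩ := by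
      simp only [omegaSubRep, hrep]
      abel
    change omegaC r.2 - omegaC r.1 ∈ W
    rw [hdiff]
    exact W.sub_mem (hmem _) (hmem _)
  · refine Submodule.span_le.mpr ?_
    rintro _ ⟨y, rfl⟩
    exact omegaC_sub_mem_incImage_of_reachable
      (SimpleGraph.ConnectedComponent.exact (connectedComponentMk_linkageRep y.1).symm)

theorem linearIndependent_omegaSubRep :
    LinearIndependent ℝ fun y : {y // linkageRep R y ≠ y} => omegaSubRep R y.1 := by
  -- restricted to the non-representatives, these vectors are the standard basis
  refine .of_comp (LinearMap.funLeft ℝ ℝ fun y : {y // linkageRep R y ≠ y} => y.1.1) ?_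
  convert (Pi.basisFun ℝ {y // linkageRep R y ≠ y}).linearIndependent using 1
  ext y z
  have hz : z.1.1 ≠ (linkageRep R y.1).1 := fun h =>
    z.2 (by rw [Subtype.ext h, linkageRep_linkageRep])
  simp only [Function.comp_apply, LinearMap.funLeft_apply, Pi.basisFun_apply, omegaSubRep,
    Pi.sub_apply, omegaC, if_neg hz, sub_zero, Pi.single_apply, Subtype.ext_iff]

theorem finrank_incImage_add_numLinkageClasses :
    finrank ℝ (incImage R) + numLinkageClasses R = numComplexes R := by
  have hreps : {y // linkageRep R y = y} ≃ (linkGraph R).ConnectedComponent :=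
    { toFun y := (linkGraph R).connectedComponentMk y.1
      invFun c := ⟨c.out, congrArg Quot.out c.out_eq⟩
      left_inv y := Subtype.ext y.2
      right_inv c := c.out_eq }
  rw [incImage_eq_span_omegaSubRep, finrank_span_eq_card linearIndependent_omegaSubRep,
    numLinkageClasses, ← Nat.card_congr hreps, Nat.card_eq_fintype_card, numComplexes,
    ← Fintype.card_coe, ← Fintype.card_congr (Equiv.sumCompl fun y => linkageRep R y = y),
    Fintype.card_sum, add_comm]

theorem deficiency_eq_finrank_incImage_sub_crnRank :
    deficiency R = (finrank ℝ (incImage R) : ℤ) - crnRank R := by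
  have := finrank_incImage_add_numLinkageClasses (R := R)
  rw [deficiency]
  omega

variable {ι : Type*} {f : ι → Finset (Rxn σ)}

theorem IsCovering.iSup_incImage (h : IsCovering R f) : ⨆ i, incImage (f i) = incImage R := by
  simp only [incImage, ← Submodule.span_iUnion, ← Set.image_iUnion, h.iUnion_eq]

variable [Fintype ι]

theorem IsCovering.finrank_incImage_le_sum (h : IsCovering R f) :
    finrank ℝ (incImage R) ≤ ∑ i, finrank ℝ (incImage (f i)) := by
  rw [← h.iSup_incImage]
  exact Submodule.finrank_iSup_le_sum _

theorem IsCovering.isIncidenceIndependent_iff (h : IsCovering R f) :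
    IsIncidenceIndependent R f ↔ finrank ℝ (incImage R) = ∑ i, finrank ℝ (incImage (f i)) := by
  rw [IsIncidenceIndependent, and_iff_right h.iSup_incImage,
    Submodule.iSupIndep_iff_finrank_iSup_eq_sum, h.iSup_incImage]

end Incidence

theorem stmt_5_general (R : Finset (Rxn S)) {k : ℕ}
    (f : Fin k → Finset (Rxn S)) (hdec : IsDecomposition R f) :
    ((IsIndependent R f ∨ IsIncidenceIndependent R f) ∧
        deficiency R = ∑ i, deficiency (f i)) ↔
      (IsIndependent R f ∧ IsIncidenceIndependent R f) := by
  have hcov := hdec.isCovering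
  have hs := hcov.crnRank_le_sum
  have hn := hcov.finrank_incImage_le_sum
  simp only [deficiency_eq_finrank_incImage_sub_crnRank, Finset.sum_sub_distrib, ← Nat.cast_sum]
  rw [hcov.isIndependent_iff, hcov.isIncidenceIndependent_iff]
  omega

/-- a decomposition is bi-independent iff it is independent or incidence
independent and δ = δ_1 + ... + δ_k. -/
theorem stmt_5 (C : Finset (S → ℝ)) (R : Finset (Rxn S)) {k : ℕ}
    (f : Fin k → Finset (Rxn S)) (hcrn : IsCRN C R) (hdec : IsDecomposition R f) :
    ((IsIndependent R f ∨ IsIncidenceIndependent R f) ∧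
        deficiency R = ∑ i, deficiency (f i)) ↔
      (IsIndependent R f ∧ IsIncidenceIndependent R f) :=
  stmt_5_general R f hdec
end
end

section
/- A chemical reaction network has independent linkage classes if and only if every C-decomposition of the network is independent. -/
open scoped Classical

noncomputable section

variable {S : Type*} [Fintype S]

/-!
An undirected path of reactions never leaves the complexes of one block of a `𝒞`-decomposition,
so every linkage class lies inside a single block: each `𝒞`-decomposition is a coarsening of the
linkage class decomposition. Grouping an independent family of subspaces keeps it independent,
so ILC forces every `𝒞`-decomposition to be independent; conversely the linkage class
decomposition is itself a `𝒞`-decomposition.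
-/

section Stoichiometry

variable {σ ι κ : Type*}

lemma IsDecomposition.isCovering_s11 {R : Finset (Rxn σ)} {f : ι → Finset (Rxn σ)}
    (hf : IsDecomposition R f) : IsCovering R f :=
  hf.2.2

lemma IsDecomposition.comp_equiv {R : Finset (Rxn σ)} {f : ι → Finset (Rxn σ)}
    (hf : IsDecomposition R f) (e : κ ≃ ι) : IsDecomposition R (f ∘ e) := by
  obtain ⟨hne, hdisj, hsub, hcov⟩ := hf
  refine ⟨fun c => hne (e c), hdisj.comp_of_injective e.injective, fun c => hsub (e c),
    fun r hr => ?_⟩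
  obtain ⟨i, hi⟩ := hcov r hr
  exact ⟨e.symm i, by simpa using hi⟩

lemma iSup_stoichSubspace_of_isCovering {R : Finset (Rxn σ)} {f : ι → Finset (Rxn σ)}
    (hf : IsCovering R f) : ⨆ i, stoichSubspace (f i) = stoichSubspace R := by
  have hunion : (⋃ i, (f i : Set (Rxn σ))) = R := by
    ext r
    simp only [Set.mem_iUnion, Finset.mem_coe]
    exact ⟨fun ⟨i, hi⟩ => hf.1 i hi, hf.2 r⟩
  simp only [stoichSubspace, ← Submodule.span_iUnion, ← Set.image_iUnion, hunion]

lemma IsIndependent.of_comp_surjective {R : Finset (Rxn σ)} {f : ι → Finset (Rxn σ)}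
    {e : κ → ι} (he : Function.Surjective e) (h : IsIndependent R (f ∘ e)) :
    IsIndependent R f :=
  ⟨(he.iSup_comp fun i => stoichSubspace (f i)).symm.trans h.1,
    iSupIndep.comp' (t := fun i => stoichSubspace (f i)) h.2 he⟩

lemma iSupIndep_stoichSubspace_of_subset {f : κ → Finset (Rxn σ)} {g : ι → Finset (Rxn σ)}
    {p : κ → ι} (hf : iSupIndep fun c => stoichSubspace (f c)) (hfg : ∀ c, f c ⊆ g (p c))
    (hg : Pairwise fun i j => Disjoint (g i) (g j)) (hcov : ∀ j, ∀ r ∈ g j, ∃ c, r ∈ f c) :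
    iSupIndep fun j => stoichSubspace (g j) := by
  have hle : ∀ j, stoichSubspace (g j) ≤ ⨆ c ∈ p ⁻¹' {j}, stoichSubspace (f c) := by
    intro j
    rw [stoichSubspace, Submodule.span_le]
    rintro _ ⟨r, hr, rfl⟩
    obtain ⟨c, hc⟩ := hcov j r hr
    have hpc : p c = j := by
      by_contra hne
      exact Finset.disjoint_left.mp (hg hne) (hfg c hc) hr
    exact le_biSup (fun c => stoichSubspace (f c)) hpc (Submodule.subset_span ⟨r, hc, rfl⟩)
  intro j
  refine (hf.disjoint_biSup_biSup (disjoint_compl_right (a := p ⁻¹' {j}))).mono (hle j) ?_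
  refine iSup₂_le fun j' hj' => (hle j').trans (biSup_mono fun c hc => ?_)
  simp only [Set.mem_preimage, Set.mem_singleton_iff] at hc
  simpa [hc] using hj'

end Stoichiometry

lemma fst_mem_complexesOf {R : Finset (Rxn S)} {r : Rxn S} (h : r ∈ R) :
    r.1 ∈ complexesOf R :=
  Finset.mem_union_left _ (Finset.mem_image_of_mem Prod.fst h)

lemma snd_mem_complexesOf {R : Finset (Rxn S)} {r : Rxn S} (h : r ∈ R) :
    r.2 ∈ complexesOf R :=
  Finset.mem_union_right _ (Finset.mem_image_of_mem Prod.snd h)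

lemma mem_complexesOf_iff {R : Finset (Rxn S)} {y : S → ℝ} :
    y ∈ complexesOf R ↔ ∃ r ∈ R, r.1 = y ∨ r.2 = y := by
  simp only [complexesOf, Finset.mem_union, Finset.mem_image]
  aesop

section CDecomposition

variable {ι : Type*} {f : ι → Finset (Rxn S)}

lemma CDisjoint.eq_of_mem_complexesOf (hf : CDisjoint f) {y : S → ℝ} {i j : ι}
    (hi : y ∈ complexesOf (f i)) (hj : y ∈ complexesOf (f j)) : i = j := by
  by_contra hne
  exact Finset.disjoint_left.mp (hf hne) hi hj

lemma CDisjoint.mem_complexesOf_of_undirReach {R : Finset (Rxn S)} (hf : CDisjoint f)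
    (hcov : ∀ r ∈ R, ∃ i, r ∈ f i) {y z : S → ℝ} (h : undirReach R y z) {j : ι}
    (hy : y ∈ complexesOf (f j)) : z ∈ complexesOf (f j) := by
  induction h with
  | refl => exact hy
  | tail _ hedge ih =>
    rcases hedge with hr | hr
    · obtain ⟨i, hi⟩ := hcov _ hr
      exact hf.eq_of_mem_complexesOf ih (fst_mem_complexesOf hi) ▸ snd_mem_complexesOf hi
    · obtain ⟨i, hi⟩ := hcov _ hr
      exact hf.eq_of_mem_complexesOf ih (snd_mem_complexesOf hi) ▸ fst_mem_complexesOf hi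

end CDecomposition

section LinkageClasses

variable (R : Finset (Rxn S))

lemma undirReach_of_reachable {u v : {y : S → ℝ // y ∈ complexesOf R}}
    (h : (linkGraph R).Reachable u v) : undirReach R u.1 v.1 := by
  rw [SimpleGraph.reachable_iff_reflTransGen] at h
  induction h with
  | refl => exact Relation.ReflTransGen.refl
  | tail _ hadj ih => exact ih.tail hadj.2

lemma connectedComponentMk_fst_eq_snd {r : Rxn S} (hr : r ∈ R) :
    (linkGraph R).connectedComponentMk ⟨r.1, fst_mem_complexesOf hr⟩ =
      (linkGraph R).connectedComponentMk ⟨r.2, snd_mem_complexesOf hr⟩ := by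
  by_cases hloop : r.1 = r.2
  · congr 1
    exact Subtype.ext hloop
  · exact SimpleGraph.ConnectedComponent.sound
      (SimpleGraph.Adj.reachable ⟨fun h => hloop (congrArg Subtype.val h), Or.inl hr⟩)

lemma mem_lcReactions_connectedComponentMk {r : Rxn S} (hr : r ∈ R) :
    r ∈ lcReactions R ((linkGraph R).connectedComponentMk ⟨r.1, fst_mem_complexesOf hr⟩) :=
  Finset.mem_filter.mpr ⟨hr, fst_mem_complexesOf hr, rfl⟩

lemma lcReactions_nonempty (c : (linkGraph R).ConnectedComponent) :
    (lcReactions R c).Nonempty := by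
  induction c using SimpleGraph.ConnectedComponent.ind with
  | h v =>
    obtain ⟨r, hr, hv | hv⟩ := mem_complexesOf_iff.mp v.2
    · rw [show v = ⟨r.1, fst_mem_complexesOf hr⟩ from Subtype.ext hv.symm]
      exact ⟨r, mem_lcReactions_connectedComponentMk R hr⟩
    · rw [show v = ⟨r.2, snd_mem_complexesOf hr⟩ from Subtype.ext hv.symm,
        ← connectedComponentMk_fst_eq_snd R hr]
      exact ⟨r, mem_lcReactions_connectedComponentMk R hr⟩

lemma connectedComponentMk_of_mem_complexesOf_lcReactions
    {c : (linkGraph R).ConnectedComponent} {y : S → ℝ}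
    (hy : y ∈ complexesOf (lcReactions R c)) :
    ∃ h : y ∈ complexesOf R, (linkGraph R).connectedComponentMk ⟨y, h⟩ = c := by
  obtain ⟨r, hrc, rfl | rfl⟩ := mem_complexesOf_iff.mp hy
  · obtain ⟨hr, _, hc⟩ := Finset.mem_filter.mp hrc
    exact ⟨fst_mem_complexesOf hr, hc⟩
  · obtain ⟨hr, _, hc⟩ := Finset.mem_filter.mp hrc
    exact ⟨snd_mem_complexesOf hr, (connectedComponentMk_fst_eq_snd R hr).symm.trans hc⟩

lemma cDisjoint_lcReactions : CDisjoint (lcReactions R) := by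
  intro c c' hne
  refine Finset.disjoint_left.mpr fun y hy hy' => hne ?_
  obtain ⟨_, hc⟩ := connectedComponentMk_of_mem_complexesOf_lcReactions R hy
  obtain ⟨_, hc'⟩ := connectedComponentMk_of_mem_complexesOf_lcReactions R hy'
  exact hc.symm.trans hc'

lemma isDecomposition_lcReactions : IsDecomposition R (lcReactions R) := by
  refine ⟨lcReactions_nonempty R, fun c c' hne => ?_, fun c => Finset.filter_subset _ _,
    fun r hr => ⟨_, mem_lcReactions_connectedComponentMk R hr⟩⟩
  refine Finset.disjoint_left.mpr fun r hr hr' => hne ?_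
  obtain ⟨-, _, hc⟩ := Finset.mem_filter.mp hr
  obtain ⟨-, _, hc'⟩ := Finset.mem_filter.mp hr'
  exact hc.symm.trans hc'

lemma undirReach_of_mem_lcReactions {c : (linkGraph R).ConnectedComponent} {r r' : Rxn S}
    (hr : r ∈ lcReactions R c) (hr' : r' ∈ lcReactions R c) : undirReach R r.1 r'.1 := by
  obtain ⟨-, h, hc⟩ := Finset.mem_filter.mp hr
  obtain ⟨-, h', hc'⟩ := Finset.mem_filter.mp hr'
  exact undirReach_of_reachable R (u := ⟨r.1, h⟩) (v := ⟨r'.1, h'⟩)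
    (SimpleGraph.ConnectedComponent.eq.mp (hc.trans hc'.symm))

lemma exists_lcReactions_subset_of_cDisjoint {ι : Type*} {f : ι → Finset (Rxn S)}
    (hf : CDisjoint f) (hcov : ∀ r ∈ R, ∃ i, r ∈ f i) (c : (linkGraph R).ConnectedComponent) :
    ∃ i, lcReactions R c ⊆ f i := by
  obtain ⟨r₀, hr₀⟩ := lcReactions_nonempty R c
  obtain ⟨i, hi⟩ := hcov r₀ (Finset.filter_subset _ _ hr₀)
  refine ⟨i, fun r hr => ?_⟩
  have hrR : r ∈ R := Finset.filter_subset _ _ hr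
  obtain ⟨j, hj⟩ := hcov r hrR
  have hr₁ : r.1 ∈ complexesOf (f i) := hf.mem_complexesOf_of_undirReach hcov
    (undirReach_of_mem_lcReactions R hr₀ hr) (fst_mem_complexesOf hi)
  exact hf.eq_of_mem_complexesOf hr₁ (fst_mem_complexesOf hj) ▸ hj

end LinkageClasses

theorem stmt_11_general (R : Finset (Rxn S)) :
    HasILC R ↔
      ∀ (k : ℕ) (f : Fin k → Finset (Rxn S)),
        IsDecomposition R f → CDisjoint f → IsIndependent R f := by
  constructor
  · intro hILC k f hf hfC
    choose p hp using exists_lcReactions_subset_of_cDisjoint R hfC hf.isCovering_s11.2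
    exact ⟨iSup_stoichSubspace_of_isCovering hf.isCovering_s11,
      iSupIndep_stoichSubspace_of_subset hILC.2 hp hf.2.1
        fun j r hr => ⟨_, mem_lcReactions_connectedComponentMk R (hf.isCovering_s11.1 j hr)⟩⟩
  · intro h
    obtain ⟨k, ⟨e⟩⟩ := Finite.exists_equiv_fin (linkGraph R).ConnectedComponent
    exact IsIndependent.of_comp_surjective e.symm.surjective
      (h k _ ((isDecomposition_lcReactions R).comp_equiv e.symm)
        ((cDisjoint_lcReactions R).comp_of_injective e.symm.injective))

/-- a network has independent linkage classes iff every
C-decomposition of the network is independent. -/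
theorem stmt_11 (C : Finset (S → ℝ)) (R : Finset (Rxn S)) (hcrn : IsCRN C R) :
    HasILC R ↔
      ∀ (k : ℕ) (f : Fin k → Finset (Rxn S)),
        IsDecomposition R f → CDisjoint f → IsIndependent R f :=
  stmt_11_general R

end
end
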